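/- Fix p, q > 0, d > 0. Let ρ(x;σ) = (1/(2σ)) e^{-|x|/σ} be the Laplace density. Then for the symmetric case k = 1, the asymptotic scaling limit satisfies: lim_{σ→0⁺} [∫_0^d dx / (p ρ(x;σ) + q ρ(d-x;σ))] / (π σ² e^{d/(2σ)}) = 1/√(pq). -/

import Mathlib

/-!
On `[0, d]` the integrand is `(2σ / p) / (e^{-x/σ} + c² e^{x/σ})` with
`c = √(q/p) e^{-d/(2σ)}`, which has the elementary antiderivative
`(2σ² / (p c)) arctan (c e^{x/σ})`. Hence, with `t = d/(2σ)`, the normalised integral equals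
`(2 / (π √(pq))) (arctan (√(q/p) e^t) - arctan (√(q/p) e^{-t}))`, and as `t → ∞` the bracket
tends to `π/2 - 0`.
-/

open MeasureTheory Real Filter

/-- The Laplace density with scale `σ`. -/
noncomputable def laplacePDF (σ x : ℝ) : ℝ := (1 / (2 * σ)) * Real.exp (-|x| / σ)

open Topology

lemma laplacePDF_of_nonneg {x : ℝ} (σ : ℝ) (hx : 0 ≤ x) :
    laplacePDF σ x = exp (-x / σ) / (2 * σ) := by
  rw [laplacePDF, abs_of_nonneg hx]
  ring

lemma hasDerivAt_arctan_mul_exp_div (c : ℝ) {σ : ℝ} (hσ : σ ≠ 0) (x : ℝ) :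
    HasDerivAt (fun y => arctan (c * exp (y / σ)))
      (c / σ / (exp (-x / σ) + c ^ 2 * exp (x / σ))) x := by
  have hinner : HasDerivAt (fun y => c * exp (y / σ)) (c * (exp (x / σ) * (1 / σ))) x := by
    simpa using (((hasDerivAt_id x).div_const σ).exp).const_mul c
  convert hinner.arctan using 1
  rw [neg_div, exp_neg]
  field_simp

lemma integral_inv_exp_neg_div_add_sq_mul_exp_div {c σ : ℝ} (hc : c ≠ 0) (hσ : σ ≠ 0) (a b : ℝ) :
    ∫ x in a..b, 1 / (exp (-x / σ) + c ^ 2 * exp (x / σ)) =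
      σ / c * (arctan (c * exp (b / σ)) - arctan (c * exp (a / σ))) := by
  have hcont : Continuous fun x => c / σ / (exp (-x / σ) + c ^ 2 * exp (x / σ)) :=
    continuous_const.div (by fun_prop) fun x => by positivity
  have hderiv : ∫ x in a..b, c / σ / (exp (-x / σ) + c ^ 2 * exp (x / σ)) =
      arctan (c * exp (b / σ)) - arctan (c * exp (a / σ)) :=
    intervalIntegral.integral_eq_sub_of_hasDerivAt
      (fun x _ => hasDerivAt_arctan_mul_exp_div c hσ x) (hcont.intervalIntegrable a b)
  rw [← hderiv, ← intervalIntegral.integral_const_mul]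
  congr 1 with x
  field_simp

lemma inv_laplace_mixture_eq {p q σ d x : ℝ} (hp : 0 < p) (hq : 0 < q) (hσ : σ ≠ 0)
    (hx : x ∈ Set.Icc 0 d) :
    1 / (p * laplacePDF σ x + q * laplacePDF σ (d - x)) =
      2 * σ / p *
        (1 / (exp (-x / σ) + (sqrt (q / p) * exp (-(d / (2 * σ)))) ^ 2 * exp (x / σ))) := by
  have hsq : exp (-(d / (2 * σ))) ^ 2 = exp (-d / σ) := by
    rw [← exp_nat_mul]; congr 1; push_cast; field_simp
  have hrefl : exp (-(d - x) / σ) = exp (-d / σ) * exp (x / σ) := by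
    rw [← exp_add]; congr 1; field_simp; ring
  rw [laplacePDF_of_nonneg σ hx.1, laplacePDF_of_nonneg σ (sub_nonneg.2 hx.2), mul_pow,
    sq_sqrt (div_nonneg hq.le hp.le), hsq, hrefl]
  field_simp

lemma integral_inv_laplace_mixture {p q σ d : ℝ} (hp : 0 < p) (hq : 0 < q) (hσ : σ ≠ 0)
    (hd : 0 ≤ d) :
    ∫ x in (0 : ℝ)..d, 1 / (p * laplacePDF σ x + q * laplacePDF σ (d - x)) =
      2 * σ ^ 2 / sqrt (p * q) * exp (d / (2 * σ)) *
        (arctan (sqrt (q / p) * exp (d / (2 * σ))) -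
          arctan (sqrt (q / p) * exp (-(d / (2 * σ))))) := by
  have hc : sqrt (q / p) * exp (-(d / (2 * σ))) ≠ 0 := by positivity
  have hsqrt : sqrt (p * q) = p * sqrt (q / p) := by
    rw [← sqrt_sq hp.le, ← sqrt_mul (sq_nonneg p), sqrt_sq hp.le]
    congr 1; field_simp
  have hend : sqrt (q / p) * exp (-(d / (2 * σ))) * exp (d / σ) =
      sqrt (q / p) * exp (d / (2 * σ)) := by
    rw [mul_assoc, ← exp_add]; congr 2; field_simp; ring
  rw [intervalIntegral.integral_congr fun x hx => inv_laplace_mixture_eq hp hq hσ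
      (Set.uIcc_of_le hd ▸ hx), intervalIntegral.integral_const_mul,
    integral_inv_exp_neg_div_add_sq_mul_exp_div hc hσ, hend, zero_div, exp_zero, mul_one,
    hsqrt, exp_neg]
  field_simp

lemma tendsto_arctan_mul_exp_sub_arctan_mul_exp_neg {s : ℝ} (hs : 0 < s) :
    Tendsto (fun t => arctan (s * exp t) - arctan (s * exp (-t))) atTop (𝓝 (π / 2)) := by
  have hplus : Tendsto (fun t => arctan (s * exp t)) atTop (𝓝 (π / 2)) :=
    (tendsto_arctan_atTop.mono_right nhdsWithin_le_nhds).comp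
      (tendsto_exp_atTop.const_mul_atTop hs)
  have hdecay : Tendsto (fun t => s * exp (-t)) atTop (𝓝 0) := by
    simpa using (tendsto_exp_atBot.comp tendsto_neg_atTop_atBot).const_mul s
  have hminus : Tendsto (fun t => arctan (s * exp (-t))) atTop (𝓝 0) :=
    (continuous_arctan.tendsto' 0 0 arctan_zero).comp hdecay
  simpa using hplus.sub hminus

lemma tendsto_const_div_two_mul_nhdsGT_zero {d : ℝ} (hd : 0 < d) :
    Tendsto (fun σ : ℝ => d / (2 * σ)) (𝓝[>] 0) atTop := by
  refine (tendsto_inv_nhdsGT_zero.const_mul_atTop (half_pos hd)).congr fun σ => ?_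
  field_simp

theorem laplace_symmetric_scaling_limit (p q d : ℝ) (hp : 0 < p) (hq : 0 < q)
    (hd : 0 < d) :
    Tendsto
      (fun σ : ℝ =>
        (∫ x in (0 : ℝ)..d, 1 / (p * laplacePDF σ x + q * laplacePDF σ (d - x))) /
          (Real.pi * σ ^ 2 * Real.exp (d / (2 * σ))))
      (nhdsWithin 0 (Set.Ioi 0))
      (nhds (1 / Real.sqrt (p * q))) := by
  have hlim := ((tendsto_arctan_mul_exp_sub_arctan_mul_exp_neg (sqrt_pos.2 (div_pos hq hp))).comp
    (tendsto_const_div_two_mul_nhdsGT_zero hd)).const_mul (2 / (π * sqrt (p * q)))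
  rw [show 2 / (π * sqrt (p * q)) * (π / 2) = 1 / sqrt (p * q) by field_simp] at hlim
  refine hlim.congr' ?_
  filter_upwards [self_mem_nhdsWithin] with σ (hσ : 0 < σ)
  rw [Function.comp_apply, integral_inv_laplace_mixture hp hq hσ.ne' hd.le]
  field_simp
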